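/- Let (T_β : β < κ) be an independent sequence of Suslin trees, i.e., every product of finitely many distinct members of the sequence (ordered coordinatewise by the reversed tree orders) has the countable chain condition. Let A ⊆ κ and let α ∈ κ with α ∉ A. Then the partial order (∏_{i∈A} T_i) × T_α, where ∏_{i∈A} T_i is the finite support product of the trees T_i for i ∈ A, has the countable chain condition. -/

import Mathlib

noncomputable section

/-- The first uncountable ordinal `ω₁`. -/
def omega1 : Ordinal.{0} := (Cardinal.aleph 1).ord

/-- A club (closed unbounded) subset of `ω₁`. -/
def IsClub' (C : Set Ordinal) : Prop :=
  C ⊆ Set.Iio omega1 ∧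
  (∀ β < omega1, ∃ γ ∈ C, β ≤ γ) ∧
  (∀ α < omega1, Order.IsSuccLimit α → (∀ β < α, ∃ γ ∈ C, β ≤ γ ∧ γ < α) → α ∈ C)

/-- A stationary subset of `ω₁`: one meeting every club. -/
def IsStationaryIn (S : Set Ordinal) : Prop :=
  S ⊆ Set.Iio omega1 ∧ ∀ C : Set Ordinal, IsClub' C → (S ∩ C).Nonempty

/-- The diamond principle `♦`. -/
def DiamondPrinciple : Prop :=
  ∃ a : Ordinal → Set Ordinal,
    (∀ α, α < omega1 → a α ⊆ Set.Iio α) ∧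
    ∀ A : Set Ordinal, A ⊆ Set.Iio omega1 →
      IsStationaryIn {α | α < omega1 ∧ A ∩ Set.Iio α = a α}

open Classical in
/-- The level of a node of a tree: the order type of its set of strict
predecessors (defaulting to `0` when that set is not well-ordered). -/
noncomputable def levelOf {β : Type} [Preorder β] (x : β) : Ordinal :=
  if h : IsWellOrder {y : β // y < x} (· < ·) then
    @Ordinal.type {y : β // y < x} (· < ·) h
  else 0

/-- A tree order: the strict predecessors of every node are well-ordered. -/
def IsTreeOrder (β : Type) [Preorder β] : Prop :=
  ∀ x : β, IsWellOrder {y : β // y < x} (· < ·)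

/-- The height of a tree: the supremum of the successors of the levels of its nodes. -/
noncomputable def heightOf (β : Type) [Preorder β] : Ordinal :=
  ⨆ x : β, (levelOf x + 1)

/-- A Suslin tree: a tree of height `ω₁` all of whose chains and antichains
(in the tree sense: sets of pairwise incomparable nodes) are countable. -/
def IsSuslinTree (β : Type) [PartialOrder β] : Prop :=
  IsTreeOrder β ∧ heightOf β = omega1 ∧
  (∀ C : Set β, IsChain (· ≤ ·) C → C.Countable) ∧
  (∀ A : Set β, (A.Pairwise fun x y => ¬ x ≤ y ∧ ¬ y ≤ x) → A.Countable)

/-- Compatibility (forcing sense): a common lower bound exists. -/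
def Compat {P : Type*} [Preorder P] (p q : P) : Prop := ∃ r, r ≤ p ∧ r ≤ q

/-- The countable chain condition: every set of pairwise incompatible elements is countable. -/
def CCC (P : Type*) [Preorder P] : Prop :=
  ∀ A : Set P, (A.Pairwise fun p q => ¬ Compat p q) → A.Countable

/-- Compatibility in the upward sense: a common upper bound exists. -/
def UpCompat {P : Type*} [Preorder P] (p q : P) : Prop := ∃ r, p ≤ r ∧ q ≤ r

/-- The countable chain condition with compatibility read as the existence of
common upper bounds. -/
def CCCUp (P : Type*) [Preorder P] : Prop :=
  ∀ A : Set P, (A.Pairwise fun p q => ¬ UpCompat p q) → A.Countable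

/-- The Knaster property. -/
def Knaster (P : Type*) [Preorder P] : Prop :=
  ∀ A : Set P, ¬ A.Countable → ∃ B ⊆ A, ¬ B.Countable ∧ B.Pairwise Compat

/-- A bundled partial order. -/
structure PoCarrier : Type 1 where
  carrier : Type
  po : PartialOrder carrier

attribute [instance] PoCarrier.po

/-- The finite support product of a family `(P i : i ∈ I)` of partial orders:
conditions are functions defined on a finite subset of `I` (represented as
finitely-supported `Option`-valued functions) with `p i ∈ P i` on the domain. -/
def FinSupportProd (I : Type*) (P : I → Type*) :=
  {f : ∀ i, Option (P i) // {i | f i ≠ none}.Finite}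

/-- `q ≤ p` iff `dom p ⊆ dom q` and `q i ≤ p i` for every `i ∈ dom p`. -/
instance {I : Type*} {P : I → Type*} [∀ i, PartialOrder (P i)] :
    PartialOrder (FinSupportProd I P) where
  le q p := ∀ i x, p.1 i = some x → ∃ y, q.1 i = some y ∧ y ≤ x
  le_refl p i x h := ⟨x, h, le_rfl⟩
  le_trans a b c hab hbc i x hcx := by
    obtain ⟨y, hby, hyx⟩ := hbc i x hcx
    obtain ⟨z, haz, hzy⟩ := hab i y hby
    exact ⟨z, haz, hzy.trans hyx⟩
  le_antisymm a b hab hba := by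
    apply Subtype.ext
    funext i
    cases hbi : b.1 i with
    | none =>
      cases hai : a.1 i with
      | none => rfl
      | some z =>
        obtain ⟨w, hbw, -⟩ := hba i z hai
        rw [hbi] at hbw; exact absurd hbw (by simp)
    | some x =>
      obtain ⟨y, hay, hyx⟩ := hab i x hbi
      obtain ⟨z, hbz, hzy⟩ := hba i y hay
      rw [hbi] at hbz
      obtain rfl : x = z := by injection hbz
      rw [hay, le_antisymm hyx hzy]

/-!
A finite-support product all of whose finite subproducts are ccc is itself ccc: given an
uncountable antichain, thin it to an uncountable Δ-system of supports with root `r`; two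
conditions whose restrictions to `r` are compatible are compatible outright, because off `r`
their domains are disjoint, so restricting to `r` gives an uncountable antichain in a finite
product. The product with `T α` embeds into the finite-support product over all of `κ`, the
coordinate `α` being fresh because `α ∉ A`, and the embedding reflects compatibility.
-/

open Finset

lemma Compat.refl {P : Type*} [Preorder P] (p : P) : Compat p p := ⟨p, le_rfl, le_rfl⟩

lemma CCC.of_subsingleton {P : Type*} [Preorder P] [Subsingleton P] : CCC P :=
  fun A _ => A.subsingleton_of_subsingleton.countable

lemma CCC.countable_of_pairwise_not_compat {P ι : Type*} [Preorder P] (hP : CCC P) (f : ι → P)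
    (hf : Pairwise fun a b => ¬Compat (f a) (f b)) : Countable ι := by
  have hinj : f.Injective := fun a b hab => by
    by_contra hne
    exact hf hne (hab ▸ Compat.refl (f a))
  have hrange : (Set.range f).Countable := hP _ <| by
    rintro _ ⟨a, rfl⟩ _ ⟨b, rfl⟩ hab
    exact hf (ne_of_apply_ne f hab)
  have := hrange.to_subtype
  exact (Set.rangeFactorization_injective.mpr hinj).countable

lemma CCC.of_compat_reflecting {P Q : Type*} [Preorder P] [Preorder Q] (hQ : CCC Q) (f : P → Q)
    (hf : ∀ a b, Compat (f a) (f b) → Compat a b) : CCC P := fun A hA =>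
  Set.countable_coe_iff.mp <| hQ.countable_of_pairwise_not_compat (fun a : A => f a)
    fun a b hab h => hA a.2 b.2 (Subtype.coe_ne_coe.mpr hab) (hf a b h)

section DeltaSystem

open Function

variable {ι I : Type*}

lemma exists_not_countable_fiber {β : Type*} {W : Set ι} (hW : ¬W.Countable) (g : ι → β)
    (hg : (g '' W).Countable) : ∃ b, ¬{p ∈ W | g p = b}.Countable := by
  by_contra! h
  exact hW <| (hg.biUnion fun b _ => h b).mono fun p hp =>
    Set.mem_biUnion (Set.mem_image_of_mem g hp)
      (show p ∈ {q ∈ W | g q = g p} from ⟨hp, rfl⟩)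

lemma exists_not_countable_pairwise_disjoint (f : ι → Finset I) {W : Set ι}
    (hW : ¬W.Countable) (hf : ∀ x, {p ∈ W | x ∈ f p}.Countable) :
    ∃ W' ⊆ W, ¬W'.Countable ∧ W'.Pairwise (Disjoint on f) := by
  obtain ⟨m, hm⟩ := zorn_subset {M | M ⊆ W ∧ M.Pairwise (Disjoint on f)} fun c hcS hc =>
    ⟨⋃₀ c, ⟨Set.sUnion_subset fun M hM => (hcS hM).1,
      (Set.pairwise_sUnion hc.directedOn).mpr fun M hM => (hcS hM).2⟩,
      fun _ => Set.subset_sUnion_of_mem⟩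
  refine ⟨m, hm.prop.1, fun hmc => hW ?_, hm.prop.2⟩
  -- a maximal disjoint subfamily meets every member of `W`, and each point lies in countably many
  have hcover : W ⊆ m ∪ ⋃ q ∈ m, ⋃ x ∈ (f q : Set I), {p ∈ W | x ∈ f p} := by
    intro w hw
    by_contra hwn
    simp only [Set.mem_union, Set.mem_iUnion, Set.mem_ofPred_eq, not_or, not_exists] at hwn
    have hdisj : ∀ q ∈ m, Disjoint (f w) (f q) := fun q hq =>
      Finset.disjoint_left.mpr fun x hxw hxq => hwn.2 q hq x hxq ⟨hw, hxw⟩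
    refine hwn.1 (hm.mem_of_prop_insert ⟨Set.insert_subset hw hm.prop.1, ?_⟩)
    exact hm.prop.2.insert fun q hq _ => ⟨hdisj q hq, (hdisj q hq).symm⟩
  exact (hmc.union (hmc.biUnion fun q _ =>
    (f q).countable_toSet.biUnion fun x _ => hf x)).mono hcover

variable [DecidableEq I]

lemma exists_not_countable_pairwise_inter_subset (f : ι → Finset I) (n : ℕ) {W : Set ι}
    (hW : ¬W.Countable) (hn : ∀ p ∈ W, #(f p) ≤ n) :
    ∃ r : Finset I, ∃ W' ⊆ W, ¬W'.Countable ∧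
      W'.Pairwise fun p q => f p ∩ f q ⊆ r := by
  induction n generalizing f W with
  | zero =>
    refine ⟨∅, W, subset_rfl, hW, fun p hp q _ _ => ?_⟩
    simp [card_eq_zero.mp (Nat.le_zero.mp (hn p hp))]
  | succ n ih =>
    by_cases hx : ∃ x, ¬{p ∈ W | x ∈ f p}.Countable
    · obtain ⟨x, hx⟩ := hx
      obtain ⟨r, W', hW', hunc, hr⟩ := ih (fun p => (f p).erase x) hx fun p hp => by
        rw [card_erase_of_mem hp.2]
        exact Nat.sub_le_of_le_add (hn p hp.1)
      refine ⟨insert x r, W', hW'.trans (Set.sep_subset _ _), hunc,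
        fun p hp q hq hpq y hy => ?_⟩
      rcases eq_or_ne y x with rfl | hyx
      · exact mem_insert_self y r
      · refine mem_insert_of_mem (hr hp hq hpq ?_)
        simp only [mem_inter, mem_erase] at hy ⊢
        exact ⟨⟨hyx, hy.1⟩, hyx, hy.2⟩
    · push Not at hx
      obtain ⟨W', hW', hunc, hdisj⟩ := exists_not_countable_pairwise_disjoint f hW hx
      exact ⟨∅, W', hW', hunc, fun p hp q hq hpq =>
        (disjoint_iff_inter_eq_empty.mp (hdisj hp hq hpq)).subset⟩

theorem exists_not_countable_delta_system (f : ι → Finset I) {W : Set ι}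
    (hW : ¬W.Countable) :
    ∃ r : Finset I, ∃ W' ⊆ W, ¬W'.Countable ∧ W'.Pairwise fun p q => f p ∩ f q = r := by
  obtain ⟨n, hn⟩ := exists_not_countable_fiber hW (fun p => #(f p)) (Set.to_countable _)
  obtain ⟨r, W₁, hW₁, hunc₁, hr⟩ :=
    exists_not_countable_pairwise_inter_subset f n hn fun p hp => hp.2.le
  obtain ⟨s, hs⟩ := exists_not_countable_fiber hunc₁ (fun p => f p ∩ r) <|
    (r.powerset.finite_toSet.subset <| by
      rintro _ ⟨p, -, rfl⟩
      simp).countable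
  refine ⟨s, _, (Set.sep_subset _ _).trans (hW₁.trans (Set.sep_subset _ _)), hs,
    fun p hp q hq hpq => ?_⟩
  have hpq' := hr hp.1 hq.1 hpq
  have hps : f p ∩ r = s := hp.2
  have hqs : f q ∩ r = s := hq.2
  rw [← hps]
  refine subset_antisymm (subset_inter inter_subset_left hpq') fun x hx => ?_
  have hxq : x ∈ f q ∩ r := hqs ▸ hps ▸ hx
  exact mem_inter.mpr ⟨(mem_inter.mp hx).1, (mem_inter.mp hxq).1⟩

end DeltaSystem

namespace FinSupportProd

variable {I : Type*} {P : I → Type*}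

def dom (p : FinSupportProd I P) : Finset I := p.2.toFinset

lemma mem_dom {p : FinSupportProd I P} {i : I} : i ∈ p.dom ↔ p.1 i ≠ none :=
  Set.Finite.mem_toFinset _

variable [∀ i, PartialOrder (P i)]

lemma compat_of_forall_compat {p q : FinSupportProd I P}
    (h : ∀ i x y, p.1 i = some x → q.1 i = some y → Compat x y) : Compat p q := by
  have hcoord : ∀ i, ∃ z : Option (P i), (z ≠ none → p.1 i ≠ none ∨ q.1 i ≠ none) ∧
      (∀ x, p.1 i = some x → ∃ y, z = some y ∧ y ≤ x) ∧
      (∀ x, q.1 i = some x → ∃ y, z = some y ∧ y ≤ x) := by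
    intro i
    rcases hp : p.1 i with _ | x <;> rcases hq : q.1 i with _ | y
    · exact ⟨none, by simp⟩
    · exact ⟨some y, by simp⟩
    · exact ⟨some x, by simp⟩
    · obtain ⟨z, hzx, hzy⟩ := h i x y hp hq
      exact ⟨some z, by simp [hzx, hzy]⟩
  choose z hz using hcoord
  exact ⟨⟨z, (p.2.union q.2).subset fun i hi => (hz i).1 hi⟩,
    fun i x hx => (hz i).2.1 x hx, fun i x hx => (hz i).2.2 x hx⟩

theorem ccc (hfin : ∀ e : Finset I, e.Nonempty → CCC ((i : e) → P i)) :
    CCC (FinSupportProd I P) := by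
  classical
  intro B hB
  by_contra hunc
  obtain ⟨r, W, hWB, hWunc, hW⟩ := exists_not_countable_delta_system dom hunc
  have hr : ∀ p ∈ W, ∀ i ∈ r, p.1 i ≠ none := by
    intro p hp i hi
    obtain ⟨q, hq, hqp⟩ : ∃ q ∈ W, q ≠ p := by
      by_contra! h
      exact hWunc ((Set.countable_singleton p).mono h)
    rw [← hW hp hq hqp.symm, mem_inter] at hi
    exact mem_dom.mp hi.1
  let ρ : W → (i : r) → P i := fun p i =>
    (p.1.1 i).get (Option.isSome_iff_ne_none.mpr (hr p p.2 i i.2))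
  have hρ : ∀ (p : W) (i : r), p.1.1 i = some (ρ p i) := fun _ _ =>
    (Option.some_get _).symm
  have hrccc : CCC ((i : r) → P i) := by
    rcases r.eq_empty_or_nonempty with rfl | hne
    · exact CCC.of_subsingleton
    · exact hfin r hne
  refine hWunc (Set.countable_coe_iff.mp (hrccc.countable_of_pairwise_not_compat ρ ?_))
  rintro p q hpq ⟨g, hgp, hgq⟩
  refine hB (hWB p.2) (hWB q.2) (Subtype.coe_ne_coe.mpr hpq) (compat_of_forall_compat ?_)
  intro i x y hx hy
  have hi : i ∈ r := hW p.2 q.2 (Subtype.coe_ne_coe.mpr hpq) ▸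
    mem_inter.mpr ⟨mem_dom.mpr (by simp [hx]), mem_dom.mpr (by simp [hy])⟩
  obtain rfl : x = ρ p ⟨i, hi⟩ := Option.some_injective _ (hx.symm.trans (hρ p ⟨i, hi⟩))
  obtain rfl : y = ρ q ⟨i, hi⟩ := Option.some_injective _ (hy.symm.trans (hρ q ⟨i, hi⟩))
  exact ⟨g ⟨i, hi⟩, hgp ⟨i, hi⟩, hgq ⟨i, hi⟩⟩

section InsertAt

variable {A : Set I} (α : I)

open Classical in
def insertAt (a : (FinSupportProd A fun i => P i) × P α) : FinSupportProd I P :=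
  ⟨Function.update (fun i => if h : i ∈ A then a.1.1 ⟨i, h⟩ else none) α (some a.2),
    ((a.1.2.image Subtype.val).insert α).subset fun i hi => by
      rcases eq_or_ne i α with rfl | hiα
      · exact Set.mem_insert i _
      · rw [Set.mem_ofPred_eq, Function.update_of_ne hiα] at hi
        split_ifs at hi with hiA
        · exact Set.mem_insert_of_mem α ⟨⟨i, hiA⟩, hi, rfl⟩
        · exact absurd rfl hi⟩

def restrict (A : Set I) (g : FinSupportProd I P) : FinSupportProd A fun i => P i :=
  ⟨fun j => g.1 j, g.2.preimage Subtype.val_injective.injOn⟩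

variable {α} {a : (FinSupportProd A fun i => P i) × P α} {g : FinSupportProd I P}

lemma restrict_le_of_le_insertAt (hα : α ∉ A) (h : g ≤ insertAt α a) :
    restrict A g ≤ a.1 :=
  fun j x hx => h j x (by simp [insertAt, ne_of_mem_of_not_mem j.2 hα, hx])

lemma exists_eq_some_le_of_le_insertAt (h : g ≤ insertAt α a) :
    ∃ y, g.1 α = some y ∧ y ≤ a.2 :=
  h α a.2 (by simp [insertAt])

lemma compat_of_compat_insertAt (hα : α ∉ A) {b : (FinSupportProd A fun i => P i) × P α}
    (h : Compat (insertAt α a) (insertAt α b)) : Compat a b := by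
  obtain ⟨g, hg, hg'⟩ := h
  obtain ⟨y, hy, hyt⟩ := exists_eq_some_le_of_le_insertAt hg
  obtain ⟨y', hy', hyt'⟩ := exists_eq_some_le_of_le_insertAt hg'
  obtain rfl : y = y' := Option.some_injective _ (hy.symm.trans hy')
  exact ⟨(restrict A g, y), ⟨restrict_le_of_le_insertAt hα hg, hyt⟩,
    ⟨restrict_le_of_le_insertAt hα hg', hyt'⟩⟩

end InsertAt

end FinSupportProd

theorem finSupportProd_times_unused_tree_ccc_general {κ : Ordinal}
    (T : Set.Iio κ → PoCarrier)
    (hind : ∀ e : Finset (Set.Iio κ), e.Nonempty →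
      CCC ((i : e) → ((T i.1).carrier)ᵒᵈ))
    (A : Set (Set.Iio κ)) (α : Set.Iio κ) (hα : α ∉ A) :
    CCC (FinSupportProd A (fun i => ((T i.1).carrier)ᵒᵈ) × ((T α).carrier)ᵒᵈ) := by
  have hκ : CCC (FinSupportProd (Set.Iio κ) fun i => ((T i).carrier)ᵒᵈ) :=
    FinSupportProd.ccc hind
  -- `( :)` postpones unifying the domain of `insertAt α` with the goal, a higher-order problem
  exact (hκ.of_compat_reflecting (FinSupportProd.insertAt α) fun _ _ =>
    FinSupportProd.compat_of_compat_insertAt hα :)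

/-- Let `(T_β : β < κ)` be an independent sequence of Suslin
trees: every product of finitely many distinct members (with the reversed tree
orders, coordinatewise) has the countable chain condition.  If `A ⊆ κ` and
`α ∈ κ \ A`, then `(∏_{i ∈ A} T_i) × T_α` — the finite support product of the
trees indexed by `A`, times `T_α`, all with reversed tree orders — has the
countable chain condition. -/
theorem finSupportProd_times_unused_tree_ccc {κ : Ordinal}
    (T : Set.Iio κ → PoCarrier)
    (hS : ∀ i, IsSuslinTree (T i).carrier)
    (hind : ∀ e : Finset (Set.Iio κ), e.Nonempty →
      CCC ((i : e) → ((T i.1).carrier)ᵒᵈ))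
    (A : Set (Set.Iio κ)) (α : Set.Iio κ) (hα : α ∉ A) :
    CCC (FinSupportProd A (fun i => ((T i.1).carrier)ᵒᵈ) × ((T α).carrier)ᵒᵈ) :=
  finSupportProd_times_unused_tree_ccc_general T hind A α hα

end
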